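/- arXiv:1809.05253 — 4 statements merged into one kernel-verified Lean document; each statement's English description precedes it below -/
import Mathlib

section
/- Let D = {D_0,D_1,D_2,D_3} be a symmetric difference family of type H in a finite abelian group G with 0_G ∈ D_0 ∩ D_1 ∩ D_2 ∩ D_3, satisfying condition (d2). Then D' = {G∖D_0, G∖D_1, G∖D_2, G∖D_3} is a symmetric difference family of type H that satisfies both (d1) (no block contains 0_G) and (d2). -/
open Finset

noncomputable section

variable {G : Type*}

/-- The element of the group ring `ℤ[G]` associated to a finite subset `D ⊆ G`. -/
def grp [AddCommGroup G] [DecidableEq G] (D : Finset G) : AddMonoidAlgebra ℤ G :=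
  ∑ x ∈ D, AddMonoidAlgebra.single x 1

/-- `D^{(-1)} = {-x : x ∈ D}`. -/
def negSet [AddCommGroup G] [DecidableEq G] (D : Finset G) : Finset G :=
  D.image (fun x => -x)

/-- A subset is symmetric if `D = -D`. -/
def IsSymmetric [AddCommGroup G] [DecidableEq G] (D : Finset G) : Prop :=
  negSet D = D

/-- `G* = G \ {0}` as a finset. -/
def Gstar (G : Type*) [AddCommGroup G] [Fintype G] [DecidableEq G] : Finset G :=
  Finset.univ \ {0}

/-- A difference family of type `H`: four blocks with `λ = Σ|D_i| - |G|`. -/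
def IsTypeH [AddCommGroup G] [Fintype G] [DecidableEq G] (D : Fin 4 → Finset G) : Prop :=
  ∑ i, grp (D i) * grp (negSet (D i)) =
    ((∑ i, ((D i).card : ℤ)) - (Fintype.card G : ℤ)) • grp (Finset.univ : Finset G)
      + (Fintype.card G : ℤ) • AddMonoidAlgebra.single (0 : G) (1 : ℤ)

/-- A difference family of type `H_4^*`: four blocks with `λ = Σ|B_i| - (|G|+1)`. -/
def IsTypeH4star [AddCommGroup G] [Fintype G] [DecidableEq G] (B : Fin 4 → Finset G) : Prop :=
  ∑ i, grp (B i) * grp (negSet (B i)) =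
    ((∑ i, ((B i).card : ℤ)) - ((Fintype.card G : ℤ) + 1)) • grp (Finset.univ : Finset G)
      + ((Fintype.card G : ℤ) + 1) • AddMonoidAlgebra.single (0 : G) (1 : ℤ)

/-- A difference family of type `H_2^*`: two blocks with `λ = Σ|S_i| - (|G|+1)/2`. -/
def IsTypeH2star [AddCommGroup G] [Fintype G] [DecidableEq G] (S : Fin 2 → Finset G) : Prop :=
  ∑ i, grp (S i) * grp (negSet (S i)) =
    ((∑ i, ((S i).card : ℤ)) - ((Fintype.card G : ℤ) + 1) / 2) • grp (Finset.univ : Finset G)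
      + (((Fintype.card G : ℤ) + 1) / 2) • AddMonoidAlgebra.single (0 : G) (1 : ℤ)

/-- Condition (d3). -/
def CondD3 [AddCommGroup G] [Fintype G] [DecidableEq G] (D : Fin 4 → Finset G) : Prop :=
  grp (D 0) * grp (negSet (D 2)) + grp (D 2) * grp (negSet (D 0))
    + grp (D 1) * grp (negSet (D 3)) + grp (D 3) * grp (negSet (D 1)) =
    ((∑ i, ((D i).card : ℤ)) - (Fintype.card G : ℤ) + 1) • grp (Finset.univ : Finset G)

/-- Condition (c1). -/
def CondC1 [AddCommGroup G] [Fintype G] [DecidableEq G] (S : Fin 4 → Finset G) : Prop :=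
  grp (S 0) * grp (negSet (S 2)) + grp (S 2) * grp (negSet (S 0))
    + grp (S 1) * grp (negSet (S 3)) + grp (S 3) * grp (negSet (S 1)) =
    ((∑ i, ((S i).card : ℤ)) - (Fintype.card G : ℤ)) • grp (Finset.univ : Finset G)

/-- Condition (d2). -/
def CondD2 [AddCommGroup G] [Fintype G] [DecidableEq G] (D : Fin 4 → Finset G) : Prop :=
  ∃ E₀ E₁ : Finset G, E₀ ⊆ Gstar G ∧ E₁ ⊆ Gstar G ∧
    grp (D 0) + grp (D 1) - grp (D 2) - grp (D 3) = grp E₀ - grp (Gstar G \ E₀) ∧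
    grp (D 0) + grp (D 3) - grp (D 1) - grp (D 2) = grp E₁ - grp (Gstar G \ E₁) ∧
    IsTypeH4star ![E₀, E₁, Gstar G \ E₀, Gstar G \ E₁]

/-- A building family: eight symmetric, pairwise disjoint subsets partitioning `G*`,
satisfying (a3) and (a4). -/
def IsBuildingFamily [AddCommGroup G] [Fintype G] [DecidableEq G] (A : Fin 8 → Finset G) : Prop :=
  (∀ i, IsSymmetric (A i)) ∧
  (∀ i j, i ≠ j → Disjoint (A i) (A j)) ∧
  (Finset.univ.biUnion A = Gstar G) ∧
  IsTypeH4star ![A 0 ∪ A 1 ∪ A 6 ∪ A 7, A 2 ∪ A 3 ∪ A 4 ∪ A 5,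
    A 0 ∪ A 3 ∪ A 5 ∪ A 6, A 1 ∪ A 2 ∪ A 4 ∪ A 7] ∧
  (∑ i, grp (A i) * grp (A i)) - (∑ i, grp (A i) * grp (A (i + 4))) =
    ((Fintype.card G : ℤ) - 1) • AddMonoidAlgebra.single (0 : G) (1 : ℤ)
      + ((grp (A 0) + grp (A 1) + grp (A 2) + grp (A 3))
        - (grp (A 4) + grp (A 5) + grp (A 6) + grp (A 7)))

end

/-!
In `ℤ[G]` the complement of `D` is `G - D`, and `D G = |D| G`, so `(G - D)(G - D⁽⁻¹⁾)` differs
from `D D⁽⁻¹⁾` only by a multiple of `G`, which the type-`H` parameter `λ` absorbs. Complementing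
all four blocks negates both signed sums in (d2), so `E₀, E₁` are replaced by their complements in
`G*`; this merely permutes the blocks of the `H₄*` family.
-/

section GroupRing

variable {G : Type*} [AddCommGroup G] [DecidableEq G]

lemma mem_negSet {D : Finset G} {x : G} : x ∈ negSet D ↔ -x ∈ D := by
  simp [negSet, neg_eq_iff_eq_neg]

lemma card_negSet (D : Finset G) : (negSet D).card = D.card :=
  card_image_of_injective D neg_injective

variable [Fintype G]

lemma negSet_univ_sdiff (D : Finset G) : negSet (univ \ D) = univ \ negSet D := by
  ext x
  simp [mem_negSet]

lemma IsSymmetric.univ_sdiff {D : Finset G} (hD : IsSymmetric D) : IsSymmetric (univ \ D) := by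
  rw [IsSymmetric, negSet_univ_sdiff, hD]

lemma grp_univ_sdiff (D : Finset G) : grp (univ \ D) = grp univ - grp D := by
  rw [grp, grp, grp, sum_sdiff_eq_sub (subset_univ D)]

lemma single_mul_grp_univ (x : G) : AddMonoidAlgebra.single x (1 : ℤ) * grp univ = grp univ := by
  rw [grp, mul_sum]
  simp only [AddMonoidAlgebra.single_mul_single, one_mul]
  exact Fintype.sum_equiv (Equiv.addLeft x) _ _ fun _ => rfl

lemma grp_mul_grp_univ (D : Finset G) : grp D * grp univ = (D.card : ℤ) • grp univ := by
  rw [grp, sum_mul, sum_congr rfl fun x _ => single_mul_grp_univ x, sum_const, natCast_zsmul]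

lemma grp_univ_sdiff_mul_negSet (D : Finset G) :
    grp (univ \ D) * grp (negSet (univ \ D)) =
      ((Fintype.card G : ℤ) - 2 * D.card) • grp univ + grp D * grp (negSet D) := by
  have hU := grp_mul_grp_univ (univ : Finset G)
  have hD := grp_mul_grp_univ D
  have hD' := grp_mul_grp_univ (negSet D)
  rw [card_univ] at hU
  rw [card_negSet] at hD'
  rw [negSet_univ_sdiff, grp_univ_sdiff, grp_univ_sdiff]
  linear_combination hU - hD - hD'

lemma IsTypeH.univ_sdiff {D : Fin 4 → Finset G} (hD : IsTypeH D) :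
    IsTypeH fun i => univ \ D i := by
  have hcard (A : Finset G) : ((univ \ A).card : ℤ) = Fintype.card G - A.card := by
    rw [card_univ_sdiff, Nat.cast_sub (card_le_univ A)]
  unfold IsTypeH at hD ⊢
  simp only [grp_univ_sdiff_mul_negSet, sum_add_distrib, hD, hcard, ← sum_smul]
  simp only [sum_sub_distrib, ← mul_sum, sum_const, card_univ, Fintype.card_fin]
  module

lemma isTypeH4star_comp_perm (B : Fin 4 → Finset G) (σ : Equiv.Perm (Fin 4)) :
    IsTypeH4star (B ∘ σ) ↔ IsTypeH4star B := by
  simp only [IsTypeH4star, Function.comp_apply]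
  rw [Equiv.sum_comp σ fun i => grp (B i) * grp (negSet (B i)),
    Equiv.sum_comp σ fun i => ((B i).card : ℤ)]

lemma CondD2.univ_sdiff {D : Fin 4 → Finset G} (hD : CondD2 D) :
    CondD2 fun i => univ \ D i := by
  obtain ⟨E₀, E₁, hE₀, hE₁, h₀, h₁, hE⟩ := hD
  refine ⟨Gstar G \ E₀, Gstar G \ E₁, sdiff_subset, sdiff_subset, ?_, ?_, ?_⟩
  · simp only [Finset.sdiff_sdiff_eq_self hE₀, grp_univ_sdiff]
    linear_combination -h₀
  · simp only [Finset.sdiff_sdiff_eq_self hE₁, grp_univ_sdiff]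
    linear_combination -h₁
  · have hswap : ![Gstar G \ E₀, Gstar G \ E₁, E₀, E₁] =
        ![E₀, E₁, Gstar G \ E₀, Gstar G \ E₁] ∘ Equiv.addRight 2 := by
      ext i : 1
      fin_cases i <;> rfl
    rwa [Finset.sdiff_sdiff_eq_self hE₀, Finset.sdiff_sdiff_eq_self hE₁, hswap,
      isTypeH4star_comp_perm]

end GroupRing

/-- complements of a symmetric type-`H` family containing `0` in all blocks
and satisfying (d2) give a symmetric type-`H` family satisfying (d1) and (d2). -/
theorem complement_family_satisfies_d1_d2 {G : Type*} [AddCommGroup G] [Fintype G]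
    [DecidableEq G] (D : Fin 4 → Finset G)
    (hsym : ∀ i, IsSymmetric (D i)) (hH : IsTypeH D)
    (h0 : ∀ i, (0 : G) ∈ D i) (hd2 : CondD2 D) :
    (∀ i, IsSymmetric ((Finset.univ : Finset G) \ D i)) ∧
      IsTypeH (fun i => (Finset.univ : Finset G) \ D i) ∧
      (∀ i, (0 : G) ∉ (Finset.univ : Finset G) \ D i) ∧
      CondD2 (fun i => (Finset.univ : Finset G) \ D i) :=
  ⟨fun i => (hsym i).univ_sdiff, hH.univ_sdiff, fun i => by simp [h0 i], hd2.univ_sdiff⟩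
end

section
/- Let D = {D_0,D_1,D_2,D_3} be a symmetric difference family of type H in a finite abelian group G of order v satisfying (d2) with witness sets E_0, E_1. Then in ℤ[G]: (G + D_2 − D_0)·E_0 + (G − D_2 + D_0)·(G*∖E_0) + (G + D_1 − D_3)·E_1 + (G − D_1 + D_3)·(G*∖E_1) = (v−1)·0_G + (2v−1)·G*, where G* = G∖{0}. -/
open Finset

/-!
Put `x = D₂ - D₀`, `y = D₁ - D₃`, `p = E₀ - (G* \ E₀)`, `q = E₁ - (G* \ E₁)`. Condition (d2)
reads `p = y - x` and `q = -x - y`, so the left-hand side equals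
`2(v-1)G + xp + yq = 2(v-1)G - (x² + y²)`, while `2(x² + y²) = p² + q²`. Since the `Dᵢ` are
symmetric so are `p` and `q`, hence (as `ℤ[G]` has no `2`-torsion) so are the `Eᵢ`; the `H₄*`
condition then evaluates `p² + q² = 2(v - G)`, and the left-hand side is `(2v - 1)G - v`.
-/

instance AddMonoidAlgebra.instIsAddTorsionFree {R M : Type*} [Semiring R] [IsAddTorsionFree R] :
    IsAddTorsionFree (AddMonoidAlgebra R M) :=
  AddMonoidAlgebra.coeffAddEquiv.injective.isAddTorsionFree
    (AddMonoidAlgebra.coeffAddEquiv (R := R) (M := M)).toAddMonoidHom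

theorem eq_of_two_mul_eq_two_mul {R : Type*} [NonAssocSemiring R] [IsAddTorsionFree R] {a b : R}
    (h : 2 * a = 2 * b) : a = b :=
  nsmul_right_injective two_ne_zero (by simpa only [two_nsmul, two_mul] using h)

theorem T0_identity_of_commRing {R : Type*} [CommRing R] [IsAddTorsionFree R]
    {U d₀ d₁ d₂ d₃ a a' b b' : R} {v : ℤ}
    (hU : U * U = v • U) (ha : a + a' = U - 1) (hb : b + b' = U - 1)
    (h₀ : d₀ + d₁ - d₂ - d₃ = a - a') (h₁ : d₀ + d₃ - d₁ - d₂ = b - b')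
    (hsq : a * a + b * b + a' * a' + b' * b' = (v - 3) • U + (v + 1) • 1) :
    (U + d₂ - d₀) * a + (U - d₂ + d₀) * a' + (U + d₁ - d₃) * b + (U - d₁ + d₃) * b' =
      (v - 1) • 1 + (2 * v - 1) • (U - 1) := by
  set x := d₂ - d₀
  set y := d₁ - d₃
  have hxy : x * x + y * y = a * a + b * b + a' * a' + b' * b' - (U - 1) * (U - 1) := by
    apply eq_of_two_mul_eq_two_mul
    linear_combination (y - x + a - a') * h₀ + (-x - y + b - b') * h₁
      - (a + a' + U - 1) * ha - (b + b' + U - 1) * hb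
  simp only [zsmul_eq_mul] at hU hsq ⊢
  push_cast at hU hsq ⊢
  linear_combination U * ha + U * hb - x * h₀ - y * h₁ - hxy + 3 * hU - hsq

namespace GroupRing

/-- The involution `X ↦ X^{(-1)}` of `ℤ[G]`. -/
noncomputable def inversion (G : Type*) [AddCommGroup G] :
    AddMonoidAlgebra ℤ G →+* AddMonoidAlgebra ℤ G :=
  AddMonoidAlgebra.mapDomainRingHom ℤ negAddMonoidHom

variable {G : Type*} [AddCommGroup G] [DecidableEq G]

theorem grp_negSet (D : Finset G) : grp (negSet D) = inversion G (grp D) := by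
  simp only [grp, negSet, inversion, map_sum, AddMonoidAlgebra.mapDomainRingHom_apply,
    AddMonoidAlgebra.mapDomain_single, negAddMonoidHom_apply]
  exact Finset.sum_image fun x _ y _ h => neg_injective h

theorem inversion_grp_of_isSymmetric {D : Finset G} (h : IsSymmetric D) :
    inversion G (grp D) = grp D := by
  rw [← grp_negSet, h]

theorem grp_sdiff {S E : Finset G} (h : E ⊆ S) : grp (S \ E) = grp S - grp E :=
  Finset.sum_sdiff_eq_sub h

theorem inversion_grp_sdiff {S E : Finset G} (hE : E ⊆ S) (hS : IsSymmetric S)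
    (h : inversion G (grp E) = grp E) : inversion G (grp (S \ E)) = grp (S \ E) := by
  rw [grp_sdiff hE, map_sub, inversion_grp_of_isSymmetric hS, h]

variable [Fintype G]

theorem isSymmetric_Gstar : IsSymmetric (Gstar G) := by
  ext x
  simp only [negSet, Gstar, Finset.mem_image, Finset.mem_sdiff, Finset.mem_univ,
    Finset.mem_singleton, true_and]
  exact ⟨fun ⟨y, hy, hyx⟩ => hyx ▸ neg_ne_zero.2 hy, fun hx => ⟨-x, neg_ne_zero.2 hx, neg_neg x⟩⟩

theorem grp_Gstar : grp (Gstar G) = grp (Finset.univ : Finset G) - 1 := by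
  rw [Gstar, grp_sdiff (Finset.subset_univ _), AddMonoidAlgebra.one_def]
  simp only [grp, Finset.sum_singleton]

theorem grp_univ_mul_self :
    grp (Finset.univ : Finset G) * grp Finset.univ = (Fintype.card G : ℤ) • grp Finset.univ := by
  have single_mul (g : G) :
      grp Finset.univ * AddMonoidAlgebra.single g (1 : ℤ) = grp Finset.univ := by
    simp only [grp, Finset.sum_mul, AddMonoidAlgebra.single_mul_single, one_mul]
    exact Fintype.sum_equiv (Equiv.addRight g) _ _ fun _ => rfl
  conv_lhs => enter [2]; rw [grp]
  rw [Finset.mul_sum, Finset.sum_congr rfl fun g _ => single_mul g, Finset.sum_const,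
    Finset.card_univ, natCast_zsmul]

theorem grp_add_grp_Gstar_sdiff {E : Finset G} (hE : E ⊆ Gstar G) :
    grp E + grp (Gstar G \ E) = grp Finset.univ - 1 := by
  rw [grp_sdiff hE, grp_Gstar]
  abel

theorem card_add_card_Gstar_sdiff {E : Finset G} (hE : E ⊆ Gstar G) :
    (E.card : ℤ) + (Gstar G \ E).card = Fintype.card G - 1 := by
  rw [Finset.card_sdiff_of_subset hE, Nat.cast_sub (Finset.card_le_card hE), Gstar,
    Finset.card_sdiff_of_subset (Finset.subset_univ _), Finset.card_univ, Finset.card_singleton,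
    Nat.cast_sub Fintype.card_pos]
  ring

/-- `E - (G* \ E) = 2E - G*`, and `ℤ[G]` has no `2`-torsion. -/
theorem inversion_grp_of_inversion_sub_compl {E : Finset G} (hE : E ⊆ Gstar G)
    (h : inversion G (grp E - grp (Gstar G \ E)) = grp E - grp (Gstar G \ E)) :
    inversion G (grp E) = grp E := by
  have hGstar := inversion_grp_of_isSymmetric (isSymmetric_Gstar (G := G))
  rw [grp_sdiff hE, map_sub, map_sub, hGstar] at h
  apply eq_of_two_mul_eq_two_mul
  linear_combination h

end GroupRing

open GroupRing

theorem T0_identity_general {G : Type*} [AddCommGroup G] [Fintype G] [DecidableEq G]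
    (D : Fin 4 → Finset G) (E₀ E₁ : Finset G)
    (hsym : ∀ i, IsSymmetric (D i))
    (hE₀ : E₀ ⊆ Gstar G) (hE₁ : E₁ ⊆ Gstar G)
    (h1 : grp (D 0) + grp (D 1) - grp (D 2) - grp (D 3) = grp E₀ - grp (Gstar G \ E₀))
    (h2 : grp (D 0) + grp (D 3) - grp (D 1) - grp (D 2) = grp E₁ - grp (Gstar G \ E₁))
    (h3 : IsTypeH4star ![E₀, E₁, Gstar G \ E₀, Gstar G \ E₁]) :
    (grp (Finset.univ : Finset G) + grp (D 2) - grp (D 0)) * grp E₀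
      + (grp (Finset.univ : Finset G) - grp (D 2) + grp (D 0)) * grp (Gstar G \ E₀)
      + (grp (Finset.univ : Finset G) + grp (D 1) - grp (D 3)) * grp E₁
      + (grp (Finset.univ : Finset G) - grp (D 1) + grp (D 3)) * grp (Gstar G \ E₁) =
      ((Fintype.card G : ℤ) - 1) • AddMonoidAlgebra.single (0 : G) (1 : ℤ)
        + (2 * (Fintype.card G : ℤ) - 1) • grp (Gstar G) := by
  have hE₀sym := inversion_grp_of_inversion_sub_compl hE₀ <| by
    rw [← h1]; simp only [map_sub, map_add, inversion_grp_of_isSymmetric (hsym _)]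
  have hE₁sym := inversion_grp_of_inversion_sub_compl hE₁ <| by
    rw [← h2]; simp only [map_sub, map_add, inversion_grp_of_isSymmetric (hsym _)]
  have hsq : grp E₀ * grp E₀ + grp E₁ * grp E₁ + grp (Gstar G \ E₀) * grp (Gstar G \ E₀)
      + grp (Gstar G \ E₁) * grp (Gstar G \ E₁) =
      ((Fintype.card G : ℤ) - 3) • grp Finset.univ + ((Fintype.card G : ℤ) + 1) • 1 := by
    have hcard₀ := card_add_card_Gstar_sdiff hE₀
    have hcard₁ := card_add_card_Gstar_sdiff hE₁
    simp only [IsTypeH4star, Fin.sum_univ_succ, Fin.sum_univ_zero, Matrix.cons_val_zero,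
      Matrix.cons_val_succ, add_zero, ← add_assoc, grp_negSet, hE₀sym, hE₁sym,
      inversion_grp_sdiff hE₀ isSymmetric_Gstar hE₀sym,
      inversion_grp_sdiff hE₁ isSymmetric_Gstar hE₁sym, ← AddMonoidAlgebra.one_def] at h3
    rw [h3]
    congr 2
    linarith
  rw [← AddMonoidAlgebra.one_def, grp_Gstar]
  exact T0_identity_of_commRing grp_univ_mul_self (grp_add_grp_Gstar_sdiff hE₀)
    (grp_add_grp_Gstar_sdiff hE₁) h1 h2 hsq

/-- the identity `T₀ = (v-1)·0 + (2v-1)·G*` for symmetric type-`H` families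
satisfying (d2) with witnesses `E₀, E₁`. -/
theorem T0_identity {G : Type*} [AddCommGroup G] [Fintype G] [DecidableEq G]
    (D : Fin 4 → Finset G) (E₀ E₁ : Finset G)
    (hsym : ∀ i, IsSymmetric (D i)) (hH : IsTypeH D)
    (hE₀ : E₀ ⊆ Gstar G) (hE₁ : E₁ ⊆ Gstar G)
    (h1 : grp (D 0) + grp (D 1) - grp (D 2) - grp (D 3) = grp E₀ - grp (Gstar G \ E₀))
    (h2 : grp (D 0) + grp (D 3) - grp (D 1) - grp (D 2) = grp E₁ - grp (Gstar G \ E₁))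
    (h3 : IsTypeH4star ![E₀, E₁, Gstar G \ E₀, Gstar G \ E₁]) :
    (grp (Finset.univ : Finset G) + grp (D 2) - grp (D 0)) * grp E₀
      + (grp (Finset.univ : Finset G) - grp (D 2) + grp (D 0)) * grp (Gstar G \ E₀)
      + (grp (Finset.univ : Finset G) + grp (D 1) - grp (D 3)) * grp E₁
      + (grp (Finset.univ : Finset G) - grp (D 1) + grp (D 3)) * grp (Gstar G \ E₁) =
      ((Fintype.card G : ℤ) - 1) • AddMonoidAlgebra.single (0 : G) (1 : ℤ)
        + (2 * (Fintype.card G : ℤ) - 1) • grp (Gstar G) :=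
  T0_identity_general D E₀ E₁ hsym hE₀ hE₁ h1 h2 h3
end

section
/- Let A = {A_0,...,A_7} be a building family in a finite abelian group G. Then in ℤ[G]: (A_0 − A_4)(A_6 − A_2) + (A_1 − A_5)(A_7 − A_3) = −(A_0 + A_1 + A_2 + A_3). -/
open Finset

/-!
Write `aᵢ` for `Aᵢ` in `ℤ[G]`, `xᵢ = aᵢ - aᵢ₊₄` for `i < 4`, and `P`, `N` for the sums of the
first and last four `aᵢ`, so that `U = -(x₀x₂ + x₁x₃)`. The blocks of (a3) are symmetric and form
two complementary pairs in `G*`; with `G² = vG` and `P + N = G - 1`, condition (a3) becomes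
`(x₀ + x₁ - x₂ - x₃)² + (x₀ - x₁ - x₂ + x₃)² = 2(v - G)`, while (a4) says `Σ xᵢ² = (v - 1) + P - N`.
The left side of the first identity is `2 Σ xᵢ² + 4U`, so `4U = -4P`, and `ℤ[G]` is torsion-free.
-/

open Finset

section GroupRing

variable {G : Type*} [AddCommGroup G] [DecidableEq G]

theorem grp_union {X Y : Finset G} (h : Disjoint X Y) : grp (X ∪ Y) = grp X + grp Y :=
  sum_union h

theorem grp_biUnion {ι : Type*} [DecidableEq ι] {s : Finset ι} {A : ι → Finset G}
    (h : (s : Set ι).PairwiseDisjoint A) : grp (s.biUnion A) = ∑ i ∈ s, grp (A i) :=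
  sum_biUnion h

theorem IsSymmetric.biUnion {ι : Type*} {s : Finset ι} {A : ι → Finset G}
    (h : ∀ i ∈ s, IsSymmetric (A i)) : IsSymmetric (s.biUnion A) := by
  unfold IsSymmetric negSet at *
  rw [biUnion_image]
  exact biUnion_congr rfl h

variable [Fintype G]

theorem grp_univ_mul_self :
    grp (univ : Finset G) * grp univ = (Fintype.card G : AddMonoidAlgebra ℤ G) * grp univ := by
  have htranslate (x : G) :
      ∑ y : G, AddMonoidAlgebra.single (x + y) (1 : ℤ) = ∑ y : G, AddMonoidAlgebra.single y 1 :=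
    Fintype.sum_equiv (Equiv.addLeft x) _ _ fun _ => rfl
  simp only [grp, sum_mul_sum, AddMonoidAlgebra.single_mul_single, mul_one, htranslate,
    sum_const, card_univ, nsmul_eq_mul]

theorem grp_Gstar : grp (Gstar G) = grp univ - 1 := by
  rw [eq_sub_iff_add_eq, AddMonoidAlgebra.one_def, grp, Gstar,
    ← sum_singleton (fun x => AddMonoidAlgebra.single x (1 : ℤ)) 0]
  exact sum_sdiff (subset_univ _)

theorem card_Gstar : ((Gstar G).card : ℤ) = Fintype.card G - 1 := by
  rw [Gstar, card_sdiff_of_subset (subset_univ _), card_univ, card_singleton,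
    Nat.cast_sub Fintype.card_pos, Nat.cast_one]

theorem IsTypeH4star.sq_sub_add_sq_sub {B : Fin 4 → Finset G} (hB : IsTypeH4star B)
    (hsymm : ∀ i, IsSymmetric (B i))
    (h01 : Disjoint (B 0) (B 1)) (hu01 : B 0 ∪ B 1 = Gstar G)
    (h23 : Disjoint (B 2) (B 3)) (hu23 : B 2 ∪ B 3 = Gstar G) :
    (grp (B 0) - grp (B 1)) ^ 2 + (grp (B 2) - grp (B 3)) ^ 2
      = 2 * ((Fintype.card G : AddMonoidAlgebra ℤ G) - grp univ) := by
  have hcard01 : ((B 0).card : ℤ) + (B 1).card = Fintype.card G - 1 := by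
    rw [← card_Gstar, ← hu01, card_union_of_disjoint h01, Nat.cast_add]
  have hcard23 : ((B 2).card : ℤ) + (B 3).card = Fintype.card G - 1 := by
    rw [← card_Gstar, ← hu23, card_union_of_disjoint h23, Nat.cast_add]
  have hcard : ∑ i, ((B i).card : ℤ) = 2 * (Fintype.card G - 1) := by
    rw [Fin.sum_univ_four]; linarith
  have hgrp01 : grp (B 0) + grp (B 1) = grp univ - 1 := by rw [← grp_union h01, hu01, grp_Gstar]
  have hgrp23 : grp (B 2) + grp (B 3) = grp univ - 1 := by rw [← grp_union h23, hu23, grp_Gstar]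
  unfold IsTypeH4star at hB
  have hneg : ∀ i, negSet (B i) = B i := hsymm
  simp only [hneg, hcard, Fin.sum_univ_four, ← AddMonoidAlgebra.one_def, zsmul_eq_mul] at hB
  push_cast at hB
  linear_combination 2 * hB - (grp (B 0) + grp (B 1) + grp univ - 1) * hgrp01
    - (grp (B 2) + grp (B 3) + grp univ - 1) * hgrp23 - 2 * grp_univ_mul_self (G := G)

end GroupRing

section BuildingFamily

variable {G : Type*} [AddCommGroup G] [Fintype G] [DecidableEq G] {A : Fin 8 → Finset G}

theorem IsBuildingFamily.pairwiseDisjoint (hA : IsBuildingFamily A) (s : Finset (Fin 8)) :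
    (s : Set (Fin 8)).PairwiseDisjoint A :=
  fun i _ j _ hij => hA.2.1 i j hij

theorem IsBuildingFamily.disjoint_biUnion (hA : IsBuildingFamily A) {s t : Finset (Fin 8)}
    (h : Disjoint s t) : Disjoint (s.biUnion A) (t.biUnion A) := by
  refine (disjoint_biUnion_left _ _ _).2 fun i hi => (disjoint_biUnion_right _ _ _).2 fun j hj => ?_
  exact hA.2.1 i j (ne_of_mem_of_not_mem hi (disjoint_right.1 h hj))

theorem IsBuildingFamily.biUnion_union_biUnion (hA : IsBuildingFamily A) {s t : Finset (Fin 8)}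
    (h : s ∪ t = univ) : s.biUnion A ∪ t.biUnion A = Gstar G := by
  rw [← union_biUnion, h, hA.2.2.1]

theorem IsBuildingFamily.sum_grp (hA : IsBuildingFamily A) :
    ∑ i, grp (A i) = grp univ - 1 := by
  rw [← grp_biUnion (hA.pairwiseDisjoint univ), hA.2.2.1, grp_Gstar]

theorem IsBuildingFamily.sq_sub_add_sq_sub (hA : IsBuildingFamily A) :
    ((grp (A 0) + grp (A 1) + grp (A 6) + grp (A 7))
        - (grp (A 2) + grp (A 3) + grp (A 4) + grp (A 5))) ^ 2
      + ((grp (A 0) + grp (A 3) + grp (A 5) + grp (A 6))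
        - (grp (A 1) + grp (A 2) + grp (A 4) + grp (A 7))) ^ 2
      = 2 * ((Fintype.card G : AddMonoidAlgebra ℤ G) - grp univ) := by
  have hH4 := hA.2.2.2.1
  have hblocks : ![A 0 ∪ A 1 ∪ A 6 ∪ A 7, A 2 ∪ A 3 ∪ A 4 ∪ A 5, A 0 ∪ A 3 ∪ A 5 ∪ A 6,
      A 1 ∪ A 2 ∪ A 4 ∪ A 7] = ![({0, 1, 6, 7} : Finset (Fin 8)).biUnion A,
      ({2, 3, 4, 5} : Finset (Fin 8)).biUnion A, ({0, 3, 5, 6} : Finset (Fin 8)).biUnion A,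
      ({1, 2, 4, 7} : Finset (Fin 8)).biUnion A] := by
    simp [biUnion_insert, union_assoc]
  rw [hblocks] at hH4
  have key := hH4.sq_sub_add_sq_sub
    (fun i => by fin_cases i <;> exact IsSymmetric.biUnion fun j _ => hA.1 j)
    (hA.disjoint_biUnion (by decide)) (hA.biUnion_union_biUnion (by decide))
    (hA.disjoint_biUnion (by decide)) (hA.biUnion_union_biUnion (by decide))
  simp +decide only [Matrix.cons_val_zero, Matrix.cons_val_one, Matrix.cons_val_two,
    Matrix.cons_val_three, Matrix.head_cons, Matrix.tail_cons, grp_biUnion (hA.pairwiseDisjoint _),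
    sum_insert, mem_insert, mem_singleton, sum_singleton] at key
  linear_combination key

theorem IsBuildingFamily.sum_sq_sub (hA : IsBuildingFamily A) :
    (grp (A 0) - grp (A 4)) ^ 2 + (grp (A 1) - grp (A 5)) ^ 2 + (grp (A 2) - grp (A 6)) ^ 2
      + (grp (A 3) - grp (A 7)) ^ 2
      = ((Fintype.card G : AddMonoidAlgebra ℤ G) - 1)
        + (grp (A 0) + grp (A 1) + grp (A 2) + grp (A 3))
        - (grp (A 4) + grp (A 5) + grp (A 6) + grp (A 7)) := by
  have hA4 := hA.2.2.2.2
  simp only [Fin.sum_univ_eight, Fin.reduceAdd, ← AddMonoidAlgebra.one_def, zsmul_eq_mul] at hA4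
  push_cast at hA4
  linear_combination hA4

end BuildingFamily

/-- the identity `U = -(A₀+A₁+A₂+A₃)` for a building family. -/
theorem building_family_U_identity {G : Type*} [AddCommGroup G] [Fintype G]
    [DecidableEq G] (A : Fin 8 → Finset G) (hA : IsBuildingFamily A) :
    (grp (A 0) - grp (A 4)) * (grp (A 6) - grp (A 2))
      + (grp (A 1) - grp (A 5)) * (grp (A 7) - grp (A 3)) =
      -(grp (A 0) + grp (A 1) + grp (A 2) + grp (A 3)) := by
  have hblocks := hA.sq_sub_add_sq_sub
  have hdiffs := hA.sum_sq_sub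
  have hsum := hA.sum_grp
  rw [Fin.sum_univ_eight] at hsum
  apply smul_right_injective (AddMonoidAlgebra ℤ G) (four_ne_zero' ℤ)
  simp only [zsmul_eq_mul]
  push_cast
  linear_combination hblocks - 2 * hdiffs + 2 * hsum
end

section
/- Let D = {D_0,D_1,D_2,D_3} be a symmetric difference family of type H in a finite abelian group G of order v satisfying conditions (i) and (ii): each |D_i| = (v − √v)/2, and for every nontrivial character ψ of G exactly one of ψ(D_0),...,ψ(D_3) is nonzero and that value is ±√v. Then D satisfies (d3): 2(D_0·D_2 + D_1·D_3) = (√v − 1)²·G = (Σ|D_i| − v + 1)·G in ℤ[G] (here v is a perfect square). -/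
open Finset

/-!
Evaluating at a complex character `ψ` is a ring homomorphism `ℤ[G] → ℂ`, and by linear
independence of characters an element of `ℤ[G]` is determined by its character values.
For `ψ ≠ 1` the value `ψ(G)` vanishes, and since only one `ψ(D_i)` is nonzero both
`ψ(D_0)ψ(D_2)` and `ψ(D_1)ψ(D_3)` vanish too; for `ψ = 1` both sides equal `(n² - n)²`
because `|D_i| = (n² - n)/2`.
-/

open AddMonoidAlgebra

section CharacterValues

variable {G : Type*} [AddCommGroup G]

noncomputable def charEval (ψ : AddChar G ℂ) : AddMonoidAlgebra ℤ G →ₐ[ℤ] ℂ :=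
  lift ℤ ℂ G ψ.toMonoidHom

lemma charEval_single (ψ : AddChar G ℂ) (a : G) (c : ℤ) :
    charEval ψ (single a c) = c * ψ a := by
  simp [charEval, zsmul_eq_mul]

lemma charEval_apply [Fintype G] (ψ : AddChar G ℂ) (f : AddMonoidAlgebra ℤ G) :
    charEval ψ f = ∑ a, (f.coeff a : ℂ) * ψ a := by
  rw [charEval, lift_apply, Finsupp.sum_fintype _ _ (by simp)]
  simp [zsmul_eq_mul]

variable [DecidableEq G]

lemma charEval_grp (ψ : AddChar G ℂ) (A : Finset G) :
    charEval ψ (grp A) = ∑ a ∈ A, ψ a := by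
  simp [grp, map_sum, charEval_single]

lemma charEval_grp_univ_of_ne_one [Fintype G] {ψ : AddChar G ℂ} (hψ : ψ ≠ 1) :
    charEval ψ (grp Finset.univ) = 0 := by
  rw [charEval_grp]
  exact AddChar.sum_eq_zero_iff_ne_zero.2 hψ

lemma charEval_one_grp (A : Finset G) : charEval 1 (grp A) = A.card := by
  simp [charEval_grp]

end CharacterValues

theorem AddMonoidAlgebra.ext_of_charEval {G : Type*} [AddCommGroup G] [Fintype G]
    {f g : AddMonoidAlgebra ℤ G} (h : ∀ ψ : AddChar G ℂ, charEval ψ f = charEval ψ g) :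
    f = g := by
  classical
  have hind : LinearIndependent ℂ fun a : G => fun ψ : AddChar G ℂ => ψ a :=
    (AddChar.linearIndependent (AddChar G ℂ) ℂ).comp _ AddChar.doubleDualEmb_injective
  rw [← sub_eq_zero]
  ext a
  have key := Fintype.linearIndependent_iff.1 hind (fun a => ((f - g).coeff a : ℂ)) <| by
    ext ψ
    simpa [charEval_apply, sub_mul, sum_sub_distrib, sub_eq_zero] using h ψ
  exact_mod_cast key a

lemma mul_eq_zero_of_existsUnique_ne_zero {ι M₀ : Type*} [MulZeroClass M₀] {s : ι → M₀}
    (h : ∃! i, s i ≠ 0) {j k : ι} (hjk : j ≠ k) : s j * s k = 0 := by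
  obtain ⟨i, -, hi⟩ := h
  by_contra hne
  exact hjk ((hi j (left_ne_zero_of_mul hne)).trans (hi k (right_ne_zero_of_mul hne)).symm)

theorem d3_from_character_conditions_general {G : Type*} [AddCommGroup G] [Fintype G]
    [DecidableEq G] (D : Fin 4 → Finset G) (n : ℕ) (hv : Fintype.card G = n ^ 2)
    (hi : ∀ i, 2 * (D i).card = Fintype.card G - n)
    (hii : ∀ ψ : AddChar G ℂ, ψ ≠ 1 →
      (∃! i, (∑ x ∈ D i, ψ x) ≠ 0) ∧
      (∀ i, (∑ x ∈ D i, ψ x) = 0 ∨ (∑ x ∈ D i, ψ x) = (n : ℂ) ∨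
        (∑ x ∈ D i, ψ x) = -(n : ℂ))) :
    (2 : ℤ) • (grp (D 0) * grp (D 2) + grp (D 1) * grp (D 3)) =
        (((n : ℤ) - 1) ^ 2) • grp (Finset.univ : Finset G) ∧
      (2 : ℤ) • (grp (D 0) * grp (D 2) + grp (D 1) * grp (D 3)) =
        ((∑ i, ((D i).card : ℤ)) - (Fintype.card G : ℤ) + 1) •
          grp (Finset.univ : Finset G) := by
  have hcard : ∀ i, 2 * ((D i).card : ℤ) = n ^ 2 - n := fun i => by
    have h := hi i
    rw [hv] at h
    zify [Nat.le_self_pow two_ne_zero n] at h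
    exact h
  have hd3 : (2 : ℤ) • (grp (D 0) * grp (D 2) + grp (D 1) * grp (D 3)) =
      (((n : ℤ) - 1) ^ 2) • grp (Finset.univ : Finset G) := by
    refine AddMonoidAlgebra.ext_of_charEval fun ψ => ?_
    simp only [map_zsmul, map_add, map_mul]
    by_cases hψ : ψ = 1
    · subst hψ
      simp only [charEval_one_grp, Finset.card_univ, hv, zsmul_eq_mul]
      have hc : ∀ i, 2 * ((D i).card : ℂ) = n ^ 2 - n := fun i => by exact_mod_cast hcard i
      push_cast
      linear_combination ((D 2).card : ℂ) * hc 0 + ((n ^ 2 - n) / 2 : ℂ) * hc 2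
        + ((D 3).card : ℂ) * hc 1 + ((n ^ 2 - n) / 2 : ℂ) * hc 3
    · have hunique := (hii ψ hψ).1
      simp only [charEval_grp, charEval_grp_univ_of_ne_one hψ,
        mul_eq_zero_of_existsUnique_ne_zero hunique (show (0 : Fin 4) ≠ 2 by decide),
        mul_eq_zero_of_existsUnique_ne_zero hunique (show (1 : Fin 4) ≠ 3 by decide)]
      simp
  refine ⟨hd3, hd3.trans ?_⟩
  congr 1
  rw [Fin.sum_univ_four, hv]
  push_cast
  linarith [hcard 0, hcard 1, hcard 2, hcard 3]

/-- a symmetric type-`H` family satisfying conditions (i) and (ii)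
(character conditions) satisfies (d3). -/
theorem d3_from_character_conditions {G : Type*} [AddCommGroup G] [Fintype G]
    [DecidableEq G] (D : Fin 4 → Finset G) (n : ℕ) (hv : Fintype.card G = n ^ 2)
    (hsym : ∀ i, IsSymmetric (D i)) (hH : IsTypeH D)
    (hi : ∀ i, 2 * (D i).card = Fintype.card G - n)
    (hii : ∀ ψ : AddChar G ℂ, ψ ≠ 1 →
      (∃! i, (∑ x ∈ D i, ψ x) ≠ 0) ∧
      (∀ i, (∑ x ∈ D i, ψ x) = 0 ∨ (∑ x ∈ D i, ψ x) = (n : ℂ) ∨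
        (∑ x ∈ D i, ψ x) = -(n : ℂ))) :
    (2 : ℤ) • (grp (D 0) * grp (D 2) + grp (D 1) * grp (D 3)) =
        (((n : ℤ) - 1) ^ 2) • grp (Finset.univ : Finset G) ∧
      (2 : ℤ) • (grp (D 0) * grp (D 2) + grp (D 1) * grp (D 3)) =
        ((∑ i, ((D i).card : ℤ)) - (Fintype.card G : ℤ) + 1) •
          grp (Finset.univ : Finset G) :=
  d3_from_character_conditions_general D n hv hi hii
end
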